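/- There exist constants C > 0 and δ > 0 such that |r^flat(a) - (4/3)·a^{3/2}| ≤ C·a² for all 0 < a < δ; i.e., r^flat(a) = (4/3)a^{3/2} + O(a²) as a → 0+. -/

import Mathlib

/-!
Parametrise a pair `z < w` with `w e^w = z e^z` as `(z, w) = (σ - s, σ + s)`. The relation becomes
`σ = -s coth s`, and the objective becomes `2 s (a - (s coth s - 1))`. From
`s²/3 - s⁴/45 ≤ s coth s - 1 ≤ s²/3` the maximum over `s` is `2 s (a - s²/3)` at `s = √a`, i.e.
`4/3 a^{3/2}`, up to `O(a²)`; for `s ≥ 3/2` the bound `s coth s - 1 ≥ s - 1` makes the objective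
negative. For the lower bound, the partner `σ + s` of the witness `z = σ - s` is `φ z` because
`x e^x` is injective on `[-1, ∞)`.
-/

open Real Set

lemma nonneg_of_hasDerivAt_of_nonneg {f f' : ℝ → ℝ} (hf : ∀ x, HasDerivAt f (f' x) x)
    (h0 : f 0 = 0) (hf' : ∀ x, 0 < x → 0 ≤ f' x) {s : ℝ} (hs : 0 ≤ s) : 0 ≤ f s := by
  have hmono : MonotoneOn f (Ici 0) := by
    refine monotoneOn_of_hasDerivWithinAt_nonneg (convex_Ici 0)
      (fun x _ => (hf x).continuousAt.continuousWithinAt) (fun x _ => (hf x).hasDerivWithinAt) ?_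
    rw [interior_Ici]
    exact hf'
  exact h0 ▸ hmono self_mem_Ici hs hs

lemma sinh_le_mul_cosh {s : ℝ} (hs : 0 ≤ s) : sinh s ≤ s * cosh s := by
  have := nonneg_of_hasDerivAt_of_nonneg (f := fun x => x * cosh x - sinh x)
    (fun x => ((hasDerivAt_id x).mul (hasDerivAt_cosh x)).sub (hasDerivAt_sinh x))
    (by simp) (fun x hx => by simpa using mul_nonneg hx.le (sinh_pos_iff.2 hx).le) hs
  simpa using this

lemma mul_cosh_le_mul_sinh {s : ℝ} (hs : 0 ≤ s) : s * cosh s ≤ (1 + s ^ 2 / 3) * sinh s := by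
  have := nonneg_of_hasDerivAt_of_nonneg (f := fun x => (1 + x ^ 2 / 3) * sinh x - x * cosh x)
    (fun x => ((((hasDerivAt_pow 2 x).div_const 3).const_add 1).mul (hasDerivAt_sinh x)).sub
      ((hasDerivAt_id x).mul (hasDerivAt_cosh x)))
    (by simp) (fun x hx => by
      have := mul_nonneg hx.le (sub_nonneg.2 (sinh_le_mul_cosh hx.le))
      simp only [id_eq]; nlinarith) hs
  simpa using this

-- The derivative of the difference in `mul_sinh_le_mul_cosh` is `x / 45` times this difference.
lemma fifteen_mul_sub_pow_three_mul_cosh_le {s : ℝ} (hs : 0 ≤ s) :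
    (15 * s - s ^ 3) * cosh s ≤ (15 + 4 * s ^ 2) * sinh s := by
  have := nonneg_of_hasDerivAt_of_nonneg
    (f := fun x => (15 + 4 * x ^ 2) * sinh x - (15 * x - x ^ 3) * cosh x)
    (fun x => ((((hasDerivAt_pow 2 x).const_mul 4).const_add 15).mul (hasDerivAt_sinh x)).sub
      ((((hasDerivAt_id x).const_mul 15).sub (hasDerivAt_pow 3 x)).mul (hasDerivAt_cosh x)))
    (by simp) (fun x hx => by
      have := mul_nonneg hx.le (sub_nonneg.2 (sinh_le_mul_cosh hx.le))
      have := mul_nonneg (pow_pos hx 3).le (sinh_pos_iff.2 hx).le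
      simp only [id_eq, Pi.sub_apply]; push_cast; nlinarith) hs
  simpa using this

lemma mul_sinh_le_mul_cosh {s : ℝ} (hs : 0 ≤ s) :
    (1 + s ^ 2 / 3 - s ^ 4 / 45) * sinh s ≤ s * cosh s := by
  have := nonneg_of_hasDerivAt_of_nonneg
    (f := fun x => x * cosh x - (1 + x ^ 2 / 3 - x ^ 4 / 45) * sinh x)
    (fun x => ((hasDerivAt_id x).mul (hasDerivAt_cosh x)).sub
      (((((hasDerivAt_pow 2 x).div_const 3).const_add 1).sub
        ((hasDerivAt_pow 4 x).div_const 45)).mul (hasDerivAt_sinh x)))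
    (by simp) (fun x hx => by
      have := mul_nonneg hx.le (sub_nonneg.2 (fifteen_mul_sub_pow_three_mul_cosh_le hx.le))
      simp only [id_eq, Pi.sub_apply]; push_cast; nlinarith) hs
  simpa using this

noncomputable def cothExcess (s : ℝ) : ℝ := s * cosh s / sinh s - 1

section cothExcess

variable {s : ℝ}

lemma cothExcess_nonneg (hs : 0 < s) : 0 ≤ cothExcess s := by
  rw [cothExcess, sub_nonneg, le_div_iff₀ (sinh_pos_iff.2 hs), one_mul]
  exact sinh_le_mul_cosh hs.le

lemma sub_one_le_cothExcess (hs : 0 < s) : s - 1 ≤ cothExcess s := by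
  rw [cothExcess, sub_le_sub_iff_right, le_div_iff₀ (sinh_pos_iff.2 hs)]
  exact mul_le_mul_of_nonneg_left (sinh_lt_cosh s).le hs.le

lemma cothExcess_le (hs : 0 < s) : cothExcess s ≤ s ^ 2 / 3 := by
  rw [cothExcess, sub_le_iff_le_add, div_le_iff₀ (sinh_pos_iff.2 hs)]
  linarith [mul_cosh_le_mul_sinh hs.le]

lemma le_cothExcess (hs : 0 < s) : s ^ 2 / 3 - s ^ 4 / 45 ≤ cothExcess s := by
  rw [cothExcess, le_sub_iff_add_le, le_div_iff₀ (sinh_pos_iff.2 hs)]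
  linarith [mul_sinh_le_mul_cosh hs.le]

end cothExcess

lemma add_mul_exp_add_sub_sub_mul_exp_sub (σ s : ℝ) :
    (σ + s) * exp (σ + s) - (σ - s) * exp (σ - s) = 2 * exp σ * (σ * sinh s + s * cosh s) := by
  rw [exp_add, exp_sub, sinh_eq, cosh_eq, exp_neg]
  field_simp
  ring

lemma add_mul_exp_add_eq_iff {σ s : ℝ} (hs : 0 < s) :
    (σ + s) * exp (σ + s) = (σ - s) * exp (σ - s) ↔ σ = -(cothExcess s + 1) := by
  have hsinh := sinh_pos_iff.2 hs
  rw [← sub_eq_zero, add_mul_exp_add_sub_sub_mul_exp_sub, cothExcess, sub_add_cancel,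
    ← neg_div, eq_div_iff hsinh.ne']
  constructor
  · intro h
    have := (mul_eq_zero.1 h).resolve_left (by positivity)
    linarith
  · intro h
    rw [add_eq_zero_iff_eq_neg.2 (by linarith), mul_zero]

lemma strictMonoOn_mul_exp : StrictMonoOn (fun x => x * exp x) (Ici (-1)) := by
  refine strictMonoOn_of_hasDerivWithinAt_pos (convex_Ici _)
    (continuous_id.mul continuous_exp).continuousOn
    (fun x _ => ((hasDerivAt_id x).mul (hasDerivAt_exp x)).hasDerivWithinAt) ?_
  rw [interior_Ici]
  intro x hx
  have := mul_pos (by linarith [mem_Ioi.1 hx] : 0 < x + 1) (exp_pos x)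
  simp only [id_eq]
  linarith

lemma objective_eq_of_mul_exp_eq {a z w : ℝ} (hzw : z < w) (h : w * exp w = z * exp z) :
    (w - z) * ((z + w) / 2 + 1 + a) = 2 * ((w - z) / 2) * (a - cothExcess ((w - z) / 2)) := by
  have hσ := (add_mul_exp_add_eq_iff (σ := (z + w) / 2) (by linarith : 0 < (w - z) / 2)).1
    (by rwa [show (z + w) / 2 + (w - z) / 2 = w by ring,
      show (z + w) / 2 - (w - z) / 2 = z by ring])
  rw [hσ]
  ring

lemma two_mul_mul_sq_sub_le_of_le {b s M : ℝ} (hb : 0 ≤ b) (hb' : b ≤ 1 / 2) (hs : 0 < s)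
    (hM₁ : s ^ 2 / 3 - s ^ 4 / 45 ≤ M) (hM₂ : s - 1 ≤ M) :
    2 * s * (b ^ 2 - M) ≤ 4 / 3 * b ^ 3 + 2 * b ^ 4 := by
  rcases le_or_gt (3 / 2) s with hs' | hs'
  · have : 0 ≤ 2 * s * (M - b ^ 2) := mul_nonneg (by positivity) (by nlinarith)
    nlinarith [pow_nonneg hb 3, pow_nonneg hb 4]
  have h₁ : 2 * s * (b ^ 2 - M) ≤ 2 * s * b ^ 2 - 2 / 3 * s ^ 3 + 2 / 45 * s ^ 5 := by
    nlinarith [mul_nonneg hs.le (sub_nonneg.2 hM₁)]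
  have h₂ : 2 * s * b ^ 2 - 2 / 3 * s ^ 3 = 4 / 3 * b ^ 3 - 2 / 3 * (s - b) ^ 2 * (s + 2 * b) := by
    ring
  rcases le_or_gt s (2 * b) with hsb | hsb
  · have : s ^ 5 ≤ (2 * b) ^ 5 := pow_le_pow_left₀ hs.le hsb 5
    have : b ^ 4 * b ≤ b ^ 4 * (1 / 2) := mul_le_mul_of_nonneg_left hb' (pow_nonneg hb 4)
    nlinarith [mul_nonneg (sq_nonneg (s - b)) (by linarith : (0 : ℝ) ≤ s + 2 * b)]
  · have h₃ : s ^ 2 / 4 ≤ (s - b) ^ 2 := by nlinarith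
    have h₄ : s ^ 3 / 4 ≤ (s - b) ^ 2 * (s + 2 * b) := by
      nlinarith [mul_le_mul_of_nonneg_left (by linarith : s ≤ s + 2 * b) (sq_nonneg (s - b))]
    have h₅ : 2 / 45 * s ^ 5 ≤ 1 / 6 * s ^ 3 := by
      nlinarith [mul_nonneg (pow_pos hs 3).le (by nlinarith : (0 : ℝ) ≤ 15 / 4 - s ^ 2)]
    nlinarith [pow_nonneg hb 4]

lemma objective_le {b z w : ℝ} (hb : 0 ≤ b) (hb' : b ≤ 1 / 2) (hzw : z < w)
    (h : w * exp w = z * exp z) :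
    (w - z) * ((z + w) / 2 + 1 + b ^ 2) ≤ 4 / 3 * b ^ 3 + 2 * b ^ 4 := by
  have hs : 0 < (w - z) / 2 := by linarith
  rw [objective_eq_of_mul_exp_eq hzw h]
  exact two_mul_mul_sq_sub_le_of_le hb hb' hs (le_cothExcess hs) (sub_one_le_cothExcess hs)

lemma exists_objective_ge {b : ℝ} (hb : 0 < b) (hb' : b ≤ 3) :
    ∃ z < -1, ∀ w, -1 ≤ w → w * exp w = z * exp z →
      4 / 3 * b ^ 3 ≤ (w - z) * ((z + w) / 2 + 1 + b ^ 2) := by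
  -- `s = b` maximises `2 s (b² - s² / 3)`, the leading part of the objective.
  set σ := -(cothExcess b + 1) with hσ
  have hE₀ := cothExcess_nonneg hb
  have hE₁ := cothExcess_le hb
  refine ⟨σ - b, by linarith, fun w hw h => ?_⟩
  have hpair := (add_mul_exp_add_eq_iff hb).2 hσ
  have hw₀ : -1 ≤ σ + b := by nlinarith
  obtain rfl : w = σ + b := strictMonoOn_mul_exp.injOn hw hw₀ (h.trans hpair.symm)
  rw [hσ]
  nlinarith

theorem stmt_12 (φ : ℝ → ℝ)
    (hφ : ∀ z : ℝ, z < -1 → φ z ∈ Set.Ioo (-1 : ℝ) 0 ∧ φ z * Real.exp (φ z) = z * Real.exp z)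
    (rFlat : ℝ → ℝ)
    (hr : ∀ a : ℝ, 0 < a →
      IsGreatest ((fun z => (φ z - z) * ((z + φ z) / 2 + 1 + a)) '' Set.Iio (-1 : ℝ)) (rFlat a)) :
    ∃ C > (0 : ℝ), ∃ δ > (0 : ℝ), ∀ a : ℝ, 0 < a → a < δ →
      |rFlat a - 4 / 3 * a ^ ((3 : ℝ) / 2)| ≤ C * a ^ 2 := by
  refine ⟨2, two_pos, 1 / 4, by norm_num, fun a ha haδ => ?_⟩
  obtain ⟨b, hb, rfl⟩ : ∃ b, 0 < b ∧ b ^ 2 = a := ⟨√a, sqrt_pos.2 ha, sq_sqrt ha.le⟩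
  have hb' : b < 1 / 2 := by nlinarith
  obtain ⟨⟨z, hz, hrz⟩, hmax⟩ := hr _ ha
  have hupper : rFlat (b ^ 2) ≤ 4 / 3 * b ^ 3 + 2 * b ^ 4 := by
    obtain ⟨hφz, heq⟩ := hφ z hz
    exact hrz ▸ objective_le hb.le hb'.le (by linarith [hφz.1, mem_Iio.1 hz]) heq
  obtain ⟨z₀, hz₀, hge⟩ := exists_objective_ge hb (by linarith)
  have hlower : 4 / 3 * b ^ 3 ≤ rFlat (b ^ 2) := by
    obtain ⟨hφz₀, heq₀⟩ := hφ z₀ hz₀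
    exact (hge _ hφz₀.1.le heq₀).trans (hmax ⟨z₀, hz₀, rfl⟩)
  rw [rpow_div_two_eq_sqrt 3 (sq_nonneg b), sqrt_sq hb.le, rpow_ofNat, abs_le]
  have hb4 : (b ^ 2) ^ 2 = b ^ 4 := by ring
  constructor <;> linarith [pow_pos hb 4]
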